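/- arXiv:1712.01820 — 2 statements merged into one kernel-verified Lean document; each statement's English description precedes it below -/
import Mathlib

section
/- Let A be a unital C*-algebra, X a finite set, and U = (u_{xy})_{x,y∈X} a magic unitary over A. Suppose there exist: (i) a unital ℂ-algebra homomorphism ε : A → ℂ with ε(u_{xy}) = 1 if x = y and ε(u_{xy}) = 0 otherwise; (ii) an additive map S : A → A satisfying S(ab) = S(b)S(a) for all a, b ∈ A and S(u_{xy}) = u_{yx} for all x, y ∈ X; (iii) a unital ℂ-algebra homomorphism Δ : A → A ⊗_ℂ A (the algebraic tensor product over ℂ) with Δ(u_{xz}) = ∑_{w∈X} u_{xw} ⊗ u_{wz} for all x, z ∈ X. Then the relation ∼₁ on X defined by x ∼₁ y if and only if u_{xy} ≠ 0 is an equivalence relation (reflexive, symmetric, and transitive). -/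
open scoped TensorProduct

/-!
Reflexivity comes from the counit (`ε (u x x) = 1`) and symmetry from the antipode
(`S (u y x) = u x y`). For transitivity, the entries of a row are projections summing to `1`,
hence mutually orthogonal, so left multiplication by `u x y ⊗ u y z` picks out the single term
`w = y` of `Δ (u x z) = ∑ w, u x w ⊗ u w z`; thus `u x y ⊗ u y z ≠ 0` forces `Δ (u x z) ≠ 0`.
-/

theorem IsStarProjection.mul_eq_zero_of_sum_eq_one {A ι : Type*} [CStarAlgebra A] [Fintype ι]
    {p : ι → A} (hp : ∀ i, IsStarProjection (p i)) (hsum : ∑ i, p i = 1) {i j : ι}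
    (hij : i ≠ j) : p i * p j = 0 := by
  classical
  let := CStarAlgebra.spectralOrder A
  have := CStarAlgebra.spectralOrderedRing A
  -- `p i = ∑ k, p i * p k * p i` is a sum of positive elements, so the terms with `k ≠ i` vanish.
  have hconj : ∀ k, p i * p k * p i = star (p k * p i) * (p k * p i) := fun k => by
    rw [star_mul, (hp i).isSelfAdjoint.star_eq, (hp k).isSelfAdjoint.star_eq,
      ← mul_assoc (p i * p k), mul_assoc (p i) (p k) (p k), (hp k).isIdempotentElem.eq]
  have hsum_conj : ∑ k, p i * p k * p i = p i := by
    rw [← Finset.sum_mul, ← Finset.mul_sum, hsum, mul_one, (hp i).isIdempotentElem.eq]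
  have hrest : ∑ k ∈ Finset.univ.erase i, p i * p k * p i = 0 := by
    have := Finset.add_sum_erase Finset.univ (fun k => p i * p k * p i) (Finset.mem_univ i)
    rwa [hsum_conj, (hp i).isIdempotentElem.eq, (hp i).isIdempotentElem.eq, add_eq_left] at this
  have hj : star (p j * p i) * (p j * p i) = 0 := by
    rw [← hconj]
    refine (Finset.sum_eq_zero_iff_of_nonneg (fun k _ => ?_)).mp hrest j
      (Finset.mem_erase.mpr ⟨hij.symm, Finset.mem_univ j⟩)
    rw [hconj]
    exact star_mul_self_nonneg _
  rw [← (hp i).isSelfAdjoint.star_eq, ← (hp j).isSelfAdjoint.star_eq, ← star_mul,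
    (CStarRing.star_mul_self_eq_zero_iff _).mp hj, star_zero]

theorem TensorProduct.eq_zero_or_eq_zero_of_tmul_eq_zero {K M N : Type*} [Field K]
    [AddCommGroup M] [Module K M] [AddCommGroup N] [Module K N] {m : M} {n : N}
    (h : m ⊗ₜ[K] n = 0) : m = 0 ∨ n = 0 := by
  refine or_iff_not_imp_left.mpr fun hm => ?_
  obtain ⟨φ, hφ⟩ : ∃ φ : Module.Dual K M, φ m ≠ 0 := by
    by_contra! hφ
    exact hm ((Module.forall_dual_apply_eq_zero_iff K m).mp hφ)
  have := congrArg (fun t => TensorProduct.lid K N (LinearMap.rTensor N φ t)) h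
  simp only [LinearMap.rTensor_tmul, TensorProduct.lid_tmul, map_zero] at this
  exact (smul_eq_zero.mp this).resolve_left hφ

theorem sum_tmul_ne_zero_of_orthogonal {K A ι : Type*} [Field K] [Ring A] [Algebra K A]
    [Fintype ι] {p q : ι → A} {i : ι} (hp : IsIdempotentElem (p i))
    (hq : IsIdempotentElem (q i)) (horth : ∀ j, j ≠ i → p i * p j = 0)
    (hpi : p i ≠ 0) (hqi : q i ≠ 0) : ∑ j, p j ⊗ₜ[K] q j ≠ 0 := by
  intro h
  have hleft : (p i ⊗ₜ[K] q i) * ∑ j, p j ⊗ₜ[K] q j = p i ⊗ₜ[K] q i := by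
    rw [Finset.mul_sum, Finset.sum_eq_single i
      (fun j _ hji => by rw [Algebra.TensorProduct.tmul_mul_tmul, horth j hji,
        TensorProduct.zero_tmul])
      (fun hi => absurd (Finset.mem_univ i) hi),
      Algebra.TensorProduct.tmul_mul_tmul, hp.eq, hq.eq]
  rw [h, mul_zero] at hleft
  exact (TensorProduct.eq_zero_or_eq_zero_of_tmul_eq_zero hleft.symm).elim hpi hqi

theorem orbit_relation_is_equivalence_general {A : Type*} [CStarAlgebra A] {X : Type*}
    [Fintype X] [DecidableEq X] (u : X → X → A)
    (hstar : ∀ x y, star (u x y) = u x y)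
    (hidem : ∀ x y, u x y * u x y = u x y)
    (hrow : ∀ x, ∑ y, u x y = 1)
    (ε : A →ₐ[ℂ] ℂ)
    (hε : ∀ x y, ε (u x y) = if x = y then 1 else 0)
    (S : A → A)
    (hSadd : ∀ a b, S (a + b) = S a + S b)
    (hSu : ∀ x y, S (u x y) = u y x)
    (Δ : A →ₐ[ℂ] A ⊗[ℂ] A)
    (hΔ : ∀ x z, Δ (u x z) = ∑ w, u x w ⊗ₜ[ℂ] u w z) :
    Equivalence (fun x y : X => u x y ≠ 0) := by
  have hS0 : S 0 = 0 := (AddMonoidHom.mk' S hSadd).map_zero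
  have horth : ∀ x y w, w ≠ y → u x y * u x w = 0 := fun x y w hwy =>
    IsStarProjection.mul_eq_zero_of_sum_eq_one (fun y => ⟨hidem x y, hstar x y⟩) (hrow x)
      hwy.symm
  refine ⟨fun x hx => ?_, fun {x y} hxy hyx => ?_, fun {x y z} hxy hyz hxz => ?_⟩
  · simpa [hx] using hε x x
  · exact hxy (by rw [← hSu y x, hyx, hS0])
  · refine sum_tmul_ne_zero_of_orthogonal (K := ℂ) (p := u x) (q := fun w => u w z)
      (hidem x y) (hidem y z) (horth x y) hxy hyz ?_
    rw [← hΔ, hxz, map_zero]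

/-- Given a magic unitary `u` over a unital C*-algebra, together with a
counit `ε`, an antipode `S`, and a comultiplication `Δ` acting on the generators in the
standard way, the relation `x ∼₁ y ↔ u x y ≠ 0` is an equivalence relation. -/
theorem orbit_relation_is_equivalence {A : Type*} [CStarAlgebra A] {X : Type*}
    [Fintype X] [DecidableEq X] (u : X → X → A)
    (hstar : ∀ x y, star (u x y) = u x y)
    (hidem : ∀ x y, u x y * u x y = u x y)
    (hrow : ∀ x, ∑ y, u x y = 1)
    (hcol : ∀ x, ∑ y, u y x = 1)
    (ε : A →ₐ[ℂ] ℂ)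
    (hε : ∀ x y, ε (u x y) = if x = y then 1 else 0)
    (S : A → A)
    (hSadd : ∀ a b, S (a + b) = S a + S b)
    (hSmul : ∀ a b, S (a * b) = S b * S a)
    (hSu : ∀ x y, S (u x y) = u y x)
    (Δ : A →ₐ[ℂ] A ⊗[ℂ] A)
    (hΔ : ∀ x z, Δ (u x z) = ∑ w, u x w ⊗ₜ[ℂ] u w z) :
    Equivalence (fun x y : X => u x y ≠ 0) :=
  orbit_relation_is_equivalence_general u hstar hidem hrow ε hε S hSadd hSu Δ hΔ
end

section
/- Let X and Y be connected finite simple graphs on disjoint vertex sets and let Z = X ⊔ Y be their disjoint union, with complex adjacency matrix A_Z. Let A be a unital C*-algebra and U = (u_{zz'})_{z,z'∈V(Z)} a magic unitary over A with A_Z·U = U·A_Z. Then: (a) u_{xy}·u_{x'x''} = 0 for all x, x', x'' ∈ V(X) and all y ∈ V(Y); and (b) the projections p_x := ∑_{y∈V(Y)} u_{xy} satisfy p_x = p_{x'} for all x, x' ∈ V(X). -/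
/-!
Projections in a C*-algebra that sum to one are mutually orthogonal, and a sum of positive
elements `p q p` vanishes only if every term does. Sandwiching the `(a, d)` entry of
`A_Z U = U A_Z` between two copies of `u a b` therefore gives `u a b * u c d = 0` whenever
`a ~ c` but `b ≁ d`. For adjacent `x ~ x'` in `X` this kills `p x * (1 - p x')`, so
`p x = p x' * p x = p x'` after taking adjoints, and connectivity of `X` makes `p` constant.
Then `u x y * u x' x'' = u x y * p x' * u x' x''`, which vanishes by orthogonality in row `x'`.
-/

open Finset

namespace SimpleGraph

variable {V : Type*}

theorem Preconnected.apply_eq_of_forall_adj {G : SimpleGraph V} (hG : G.Preconnected)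
    {β : Type*} {f : V → β} (hf : ∀ x y, G.Adj x y → f x = f y) (x y : V) : f x = f y := by
  obtain ⟨w⟩ := hG x y
  induction w with
  | nil => rfl
  | cons hadj _ ih => exact (hf _ _ hadj).trans ih

variable [Fintype V] (G : SimpleGraph V) [DecidableRel G.Adj]
  {R M : Type*} [Semiring R] [AddCommMonoid M] [Module R M]

theorem sum_adjMatrix_smul_left (a : V) (f : V → M) :
    ∑ c, G.adjMatrix R a c • f c = ∑ c with G.Adj a c, f c := by
  simp only [adjMatrix_apply, boole_smul, sum_ite, sum_const_zero, add_zero]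

theorem sum_adjMatrix_smul_right (b : V) (f : V → M) :
    ∑ c, G.adjMatrix R c b • f c = ∑ c with G.Adj c b, f c := by
  simp only [adjMatrix_apply, boole_smul, sum_ite, sum_const_zero, add_zero]

end SimpleGraph

theorem IsSelfAdjoint.eq_of_mul_eq_left {R : Type*} [Mul R] [StarMul R] {p q : R}
    (hp : IsSelfAdjoint p) (hq : IsSelfAdjoint q) (hpq : p * q = p) (hqp : q * p = q) :
    p = q :=
  calc p = star (p * q) := by rw [hpq, hp.star_eq]
    _ = q * p := by rw [star_mul, hp.star_eq, hq.star_eq]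
    _ = q := hqp

namespace IsStarProjection

section CStarRing

variable {A : Type*} [NonUnitalNormedRing A] [StarRing A] [CStarRing A]

theorem mul_eq_zero_of_mul_mul_self_eq_zero {p q : A} (hp : IsStarProjection p)
    (hq : IsStarProjection q) (h : p * q * p = 0) : p * q = 0 := by
  have hconj : star (q * p) * (q * p) = p * q * p := by
    rw [star_mul, hp.isSelfAdjoint.star_eq, hq.isSelfAdjoint.star_eq, mul_assoc p,
      ← mul_assoc q, hq.isIdempotentElem.eq, mul_assoc]
  have hqp : q * p = 0 := CStarRing.star_mul_self_eq_zero_iff _ |>.mp (hconj ▸ h)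
  rw [← hp.isSelfAdjoint.star_eq, ← hq.isSelfAdjoint.star_eq, ← star_mul, hqp, star_zero]

variable [PartialOrder A] [StarOrderedRing A]

/-- Each summand `p * q i * p` is positive, so a vanishing sum forces each to vanish. -/
theorem mul_eq_zero_of_sum_mul_mul_self_eq_zero {ι : Type*} {s : Finset ι} {p : A}
    {q : ι → A} (hp : IsStarProjection p) (hq : ∀ i ∈ s, IsStarProjection (q i))
    (h : ∑ i ∈ s, p * q i * p = 0) {i : ι} (hi : i ∈ s) : p * q i = 0 := by
  refine hp.mul_eq_zero_of_mul_mul_self_eq_zero (hq i hi) ?_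
  refine (sum_eq_zero_iff_of_nonneg fun j hj ↦ ?_).mp h i hi
  exact hp.isSelfAdjoint.conjugate_nonneg (hq j hj).nonneg

end CStarRing

theorem mul_eq_zero_of_sum_eq_one_s15 {A : Type*} [NormedRing A] [StarRing A] [CStarRing A]
    [PartialOrder A] [StarOrderedRing A] {ι : Type*} [Fintype ι] [DecidableEq ι] {f : ι → A}
    (hf : ∀ i, IsStarProjection (f i)) (hsum : ∑ i, f i = 1) {i j : ι} (hij : i ≠ j) :
    f i * f j = 0 := by
  have hcompl : ∑ k ∈ univ.erase i, f k = 1 - f i := by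
    rw [← hsum, ← add_sum_erase univ f (mem_univ i), add_sub_cancel_left]
  refine (hf i).mul_eq_zero_of_sum_mul_mul_self_eq_zero (fun k _ ↦ hf k) ?_
    (mem_erase.mpr ⟨hij.symm, mem_univ j⟩)
  rw [← sum_mul, ← mul_sum, hcompl, (hf i).mul_one_sub_self, zero_mul]

end IsStarProjection

theorem mul_eq_zero_of_adj_of_not_adj {A : Type*} [NormedRing A] [StarRing A] [CStarRing A]
    [PartialOrder A] [StarOrderedRing A] {V : Type*} [Fintype V] [DecidableEq V]
    (G : SimpleGraph V) [DecidableRel G.Adj] {u : V → V → A}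
    (hu : ∀ a b, IsStarProjection (u a b)) (hrow : ∀ a, ∑ b, u a b = 1)
    (hcomm : ∀ a d, ∑ c with G.Adj a c, u c d = ∑ c with G.Adj c d, u a c)
    {a b c d : V} (hac : G.Adj a c) (hbd : ¬G.Adj b d) : u a b * u c d = 0 := by
  -- Sandwich the `(a, d)` entry of `A_G U = U A_G` between two copies of `u a b`.
  have hsum : ∑ c ∈ {c | G.Adj a c}, u a b * u c d * u a b = 0 := by
    rw [← sum_mul, ← mul_sum, hcomm, mul_sum, sum_mul]
    refine sum_eq_zero fun c' hc' ↦ ?_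
    have hbc' : b ≠ c' := by
      rintro rfl
      exact hbd (mem_filter.mp hc').2
    rw [IsStarProjection.mul_eq_zero_of_sum_eq_one_s15 (hu a) (hrow a) hbc', zero_mul]
  exact (hu a b).mul_eq_zero_of_sum_mul_mul_self_eq_zero (fun c _ ↦ hu c d) hsum
    (mem_filter.mpr ⟨mem_univ c, hac⟩)

section DisjointUnion

variable {A : Type*} [Ring A] {V W : Type*} [Fintype W] {u : V ⊕ W → V ⊕ W → A}

theorem sum_inr_eq_of_mul_eq_zero [StarRing A] [Fintype V]
    (hsa : ∀ z z', IsSelfAdjoint (u z z')) (hrow : ∀ z, ∑ z', u z z' = 1) {x x' : V}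
    (h : ∀ y x'', u (.inl x) (.inr y) * u (.inl x') (.inl x'') = 0)
    (h' : ∀ y x'', u (.inl x') (.inr y) * u (.inl x) (.inl x'') = 0) :
    ∑ y, u (.inl x) (.inr y) = ∑ y, u (.inl x') (.inr y) := by
  have hmul : ∀ x₁ x₂ : V, (∀ y x'', u (.inl x₁) (.inr y) * u (.inl x₂) (.inl x'') = 0) →
      (∑ y, u (.inl x₁) (.inr y)) * ∑ y, u (.inl x₂) (.inr y) = ∑ y, u (.inl x₁) (.inr y) := by
    intro x₁ x₂ hx
    have hrow₂ := hrow (.inl x₂)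
    rw [Fintype.sum_sum_type] at hrow₂
    rw [eq_sub_of_add_eq' hrow₂, mul_sub, mul_one, sum_mul_sum,
      Fintype.sum_eq_zero _ fun y ↦ Fintype.sum_eq_zero _ fun x'' ↦ hx y x'', sub_zero]
  exact IsSelfAdjoint.eq_of_mul_eq_left (isSelfAdjoint_sum _ fun y _ ↦ hsa _ _)
    (isSelfAdjoint_sum _ fun y _ ↦ hsa _ _) (hmul x x' h) (hmul x' x h')

theorem mul_eq_zero_of_sum_inr_eq (hidem : ∀ z z', IsIdempotentElem (u z z'))
    (horth : ∀ z z₁ z₂, z₁ ≠ z₂ → u z z₁ * u z z₂ = 0) {x x' : V}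
    (hp : ∑ y, u (.inl x) (.inr y) = ∑ y, u (.inl x') (.inr y)) (y : W) (x'' : V) :
    u (.inl x) (.inr y) * u (.inl x') (.inl x'') = 0 :=
  calc u (.inl x) (.inr y) * u (.inl x') (.inl x'')
      = u (.inl x) (.inr y) * (∑ y', u (.inl x) (.inr y')) * u (.inl x') (.inl x'') := by
        rw [mul_sum, sum_eq_single y (fun y' _ hy' ↦ horth _ _ _ (by simpa using hy'.symm))
          (by simp), (hidem _ _).eq]
    _ = u (.inl x) (.inr y) * ((∑ y', u (.inl x') (.inr y')) * u (.inl x') (.inl x'')) := by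
        rw [hp, mul_assoc]
    _ = 0 := by
        rw [sum_mul, sum_eq_zero fun y' _ ↦ horth _ _ _ Sum.inr_ne_inl, mul_zero]

end DisjointUnion

open scoped Classical in
theorem disjoint_union_block_structure_general {A : Type*} [CStarAlgebra A]
    {V W : Type*} [Fintype V] [Fintype W]
    (X : SimpleGraph V) (Y : SimpleGraph W)
    (hX : X.Connected)
    (u : V ⊕ W → V ⊕ W → A)
    (hstar : ∀ z z', star (u z z') = u z z')
    (hidem : ∀ z z', u z z' * u z z' = u z z')
    (hrow : ∀ z, ∑ z', u z z' = 1)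
    (hAU : ∀ a b : V ⊕ W,
      ∑ c, (X ⊕g Y).adjMatrix ℂ a c • u c b = ∑ c, (X ⊕g Y).adjMatrix ℂ c b • u a c) :
    (∀ (x x' x'' : V) (y : W),
        u (Sum.inl x) (Sum.inr y) * u (Sum.inl x') (Sum.inl x'') = 0) ∧
    (∀ x x' : V,
        ∑ y, u (Sum.inl x) (Sum.inr y) = ∑ y, u (Sum.inl x') (Sum.inr y)) := by
  let _ := CStarAlgebra.spectralOrder A
  have _ := CStarAlgebra.spectralOrderedRing A
  have hu : ∀ z z', IsStarProjection (u z z') := fun z z' ↦ ⟨hidem z z', hstar z z'⟩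
  have horth : ∀ z z₁ z₂, z₁ ≠ z₂ → u z z₁ * u z z₂ = 0 := fun z _ _ ↦
    IsStarProjection.mul_eq_zero_of_sum_eq_one_s15 (hu z) (hrow z)
  have hcomm : ∀ a d, ∑ c with (X ⊕g Y).Adj a c, u c d = ∑ c with (X ⊕g Y).Adj c d, u a c :=
    fun a d ↦ by
      simpa only [SimpleGraph.sum_adjMatrix_smul_left, SimpleGraph.sum_adjMatrix_smul_right]
        using hAU a d
  have hadj : ∀ x x', X.Adj x x' → ∀ y x'',
      u (Sum.inl x) (Sum.inr y) * u (Sum.inl x') (Sum.inl x'') = 0 := fun x x' hxx' y x'' ↦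
    mul_eq_zero_of_adj_of_not_adj _ hu hrow hcomm hxx'
      fun h ↦ SimpleGraph.not_adj_sum_inl_inr _ _ h.symm
  have hp : ∀ x x', ∑ y, u (Sum.inl x) (Sum.inr y) = ∑ y, u (Sum.inl x') (Sum.inr y) :=
    hX.preconnected.apply_eq_of_forall_adj (f := fun x ↦ ∑ y, u (Sum.inl x) (Sum.inr y))
      fun x x' hxx' ↦ sum_inr_eq_of_mul_eq_zero (fun z z' ↦ (hu z z').isSelfAdjoint) hrow
        (hadj x x' hxx') (hadj x' x hxx'.symm)
  exact ⟨fun x x' x'' y ↦ mul_eq_zero_of_sum_inr_eq hidem horth (hp x x') y x'', hp⟩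

open scoped Classical in
/-- Let `X`, `Y` be connected graphs, `Z = X ⊕g Y` their disjoint union,
and `U = (u z z')` a magic unitary over a unital C*-algebra commuting with the adjacency
matrix of `Z`. Then (a) `u x y * u x' x'' = 0` for `x, x', x'' ∈ V(X)`, `y ∈ V(Y)`; and
(b) the projections `p x := ∑ y, u x y` all coincide. -/
theorem disjoint_union_block_structure {A : Type*} [CStarAlgebra A]
    {V W : Type*} [Fintype V] [Fintype W]
    (X : SimpleGraph V) (Y : SimpleGraph W)
    (hX : X.Connected) (hY : Y.Connected)
    (u : V ⊕ W → V ⊕ W → A)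
    (hstar : ∀ z z', star (u z z') = u z z')
    (hidem : ∀ z z', u z z' * u z z' = u z z')
    (hrow : ∀ z, ∑ z', u z z' = 1)
    (hcol : ∀ z', ∑ z, u z z' = 1)
    (hAU : ∀ a b : V ⊕ W,
      ∑ c, (X ⊕g Y).adjMatrix ℂ a c • u c b = ∑ c, (X ⊕g Y).adjMatrix ℂ c b • u a c) :
    (∀ (x x' x'' : V) (y : W),
        u (Sum.inl x) (Sum.inr y) * u (Sum.inl x') (Sum.inl x'') = 0) ∧
    (∀ x x' : V,
        ∑ y, u (Sum.inl x) (Sum.inr y) = ∑ y, u (Sum.inl x') (Sum.inr y)) :=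
  disjoint_union_block_structure_general X Y hX u hstar hidem hrow hAU
end
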